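/- Let A be an n-dimensional (n ≥ 2) non-degenerate evolution algebra over an algebraically closed field F of characteristic zero with dim(A²) = 1. If (A²)² = 0, then A is isomorphic to the evolution algebra I_n defined on a basis {e_1,...,e_n} by e_k² = e_1 + i·e_2 for all k (where i is a square root of −1 in F) and e_k e_l = 0 for k ≠ l. -/

import Mathlib

/-!
Write `A² = F u` and `eₖ² = cₖ u`. Then `x y = B(x, y) u` for the diagonal bilinear form
`B(x, y) = ∑ cₖ xₖ yₖ`; non-degeneracy of `A` forces every `cₖ ≠ 0`, so `B` is non-degenerate,
and `(A²)² = 0` says exactly that `u` is `B`-isotropic. Over an algebraically closed field of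
characteristic `≠ 2` an isotropic vector spans, with a hyperbolic partner, a plane having an
orthonormal basis `g₀, g₁` with `u = g₀ + i g₁`, and this extends to an orthonormal basis of `A`.
In its coordinates `B` is the dot product and `u = e₁ + i e₂`, which is the product of `I_n`.
-/

open Module

/-- The evolution algebra `I_n` realized on `Fin (n+2) → F`: `eₖ² = e₀ + I·e₁` for all
`k` (where `I² = -1`) and `eₖeₗ = 0` for `k ≠ l`. -/
def inMul {F : Type*} [Field F] {n : ℕ} (I : F) (x y : Fin (n + 2) → F) :
    Fin (n + 2) → F :=
  fun k => if k = 0 then ∑ i, x i * y i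
    else if k = 1 then I * ∑ i, x i * y i else 0

/-- The product of two subspaces. -/
def mulSub {F : Type*} [Field F] {A : Type*} [NonUnitalNonAssocRing A] [Module F A]
    (P Q : Submodule F A) : Submodule F A :=
  Submodule.span F {z | ∃ x ∈ P, ∃ y ∈ Q, z = x * y}

namespace LinearMap.BilinForm

variable {F V : Type*} [Field F] [AddCommGroup V] [Module F V]

def IsOrthonormal {ι : Type*} (B : LinearMap.BilinForm F V) (v : ι → V) : Prop :=
  B.iIsOrtho v ∧ ∀ i, B (v i) (v i) = 1

variable {B : LinearMap.BilinForm F V}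

theorem IsOrthonormal.comp {ι κ : Type*} {v : ι → V} (hv : B.IsOrthonormal v) {f : κ → ι}
    (hf : Function.Injective f) : B.IsOrthonormal (v ∘ f) :=
  ⟨fun _ _ hij => hv.1 (hf.ne hij), fun _ => hv.2 _⟩

theorem IsOrthonormal.linearIndependent {ι : Type*} {v : ι → V} (hv : B.IsOrthonormal v) :
    LinearIndependent F v :=
  linearIndependent_of_iIsOrtho hv.1 fun i h => one_ne_zero ((hv.2 i).symm.trans h)

theorem IsOrthonormal.toMatrix_eq_one {ι : Type*} [Fintype ι] [DecidableEq ι] {g : Basis ι F V}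
    (hg : B.IsOrthonormal g) : toMatrix g B = 1 := by
  ext i j
  rw [toMatrix_apply, Matrix.one_apply]
  split_ifs with hij
  · rw [hij, hg.2]
  · exact hg.1 hij

theorem IsOrthonormal.apply_eq_dotProduct {ι : Type*} [Fintype ι] [DecidableEq ι]
    {g : Basis ι F V} (hg : B.IsOrthonormal g) (x y : V) :
    B x y = g.equivFun x ⬝ᵥ g.equivFun y := by
  rw [apply_eq_dotProduct_toMatrix_mulVec g, hg.toMatrix_eq_one, Matrix.one_mulVec]
  rfl

theorem exists_isOrthonormal_basis [IsAlgClosed F] [Invertible (2 : F)] [FiniteDimensional F V]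
    (hB : B.IsSymm) (hnd : B.Nondegenerate) {κ : Type*} [Fintype κ]
    (hκ : Fintype.card κ = finrank F V) : ∃ g : Basis κ F V, B.IsOrthonormal g := by
  obtain ⟨v₀, hv₀⟩ := exists_orthogonal_basis (isSymm_iff.1 hB)
  set e := Fintype.equivFinOfCardEq hκ
  set v := v₀.reindex e.symm
  have hv : B.iIsOrtho v := fun i j hij => by
    simpa [v, Function.onFun] using hv₀ (e.injective.ne hij)
  have hd : ∀ i, B (v i) (v i) ≠ 0 := hv.not_isOrtho_basis_self_of_nondegenerate hnd
  choose s hs using fun i => IsAlgClosed.exists_pow_nat_eq (B (v i) (v i)) two_pos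
  have hs0 : ∀ i, s i ≠ 0 := fun i h => hd i (by rw [← hs i, h, zero_pow two_ne_zero])
  refine ⟨v.unitsSMul fun i => (Units.mk0 (s i) (hs0 i))⁻¹, fun i j hij => ?_, fun i => ?_⟩ <;>
    simp only [Function.onFun, Basis.unitsSMul_apply, Units.smul_def, Units.val_inv_eq_inv_val,
      Units.val_mk0, map_smul, smul_apply, smul_eq_mul]
  · rw [hv hij, mul_zero, mul_zero]
  · rw [← hs i, ← mul_assoc, ← mul_inv, ← sq, inv_mul_cancel₀ (pow_ne_zero 2 (hs0 i))]

theorem IsOrthonormal.apply_sum_smul {ι : Type*} [Fintype ι] {v : ι → V}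
    (hv : B.IsOrthonormal v) (c : ι → F) (j : ι) : B (v j) (∑ i, c i • v i) = c j := by
  rw [map_sum, Finset.sum_eq_single j (fun i _ hij => by rw [map_smul, hv.1 hij.symm, smul_zero])
    (by simp), map_smul, hv.2, smul_eq_mul, mul_one]

theorem IsOrthonormal.disjoint_span_orthogonal {ι : Type*} [Fintype ι] {v : ι → V}
    (hv : B.IsOrthonormal v) :
    Disjoint (Submodule.span F (Set.range v)) (B.orthogonal (Submodule.span F (Set.range v))) := by
  rw [Submodule.disjoint_def]
  intro x hx hx'
  obtain ⟨c, rfl⟩ := Submodule.mem_span_range_iff_exists_fun F |>.1 hx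
  have hc : ∀ j, c j = 0 := fun j => by
    rw [← hv.apply_sum_smul c j]
    exact mem_orthogonal_iff.1 hx' (v j) (Submodule.subset_span ⟨j, rfl⟩)
  simp [hc]

theorem IsOrthonormal.exists_basis_sum [IsAlgClosed F] [Invertible (2 : F)]
    [FiniteDimensional F V] (hB : B.IsSymm) (hnd : B.Nondegenerate) {ι κ : Type*} [Fintype ι]
    [Fintype κ] {v : ι → V} (hv : B.IsOrthonormal v)
    (hcard : Fintype.card ι + Fintype.card κ = finrank F V) :
    ∃ g : Basis (ι ⊕ κ) F V, B.IsOrthonormal g ∧ ∀ i, g (Sum.inl i) = v i := by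
  set P := Submodule.span F (Set.range v)
  set W := B.orthogonal P
  have hW : finrank F W = Fintype.card κ := by
    rw [finrank_orthogonal hnd, finrank_span_eq_card hv.linearIndependent]
    omega
  have hWnd : (B.restrict W).Nondegenerate := by
    refine nondegenerate_restrict_of_disjoint_orthogonal B hB.isRefl ?_
    rw [orthogonal_orthogonal hnd hB.isRefl]
    exact hv.disjoint_span_orthogonal.symm
  obtain ⟨w, hw⟩ := exists_isOrthonormal_basis (hB.restrict W) hWnd hW.symm
  have hvw : ∀ i k, B (v i) (w k) = 0 := fun i k =>
    mem_orthogonal_iff.1 (w k).2 (v i) (Submodule.subset_span ⟨i, rfl⟩)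
  have hf : B.IsOrthonormal (Sum.elim v fun k => (w k : V)) := by
    refine ⟨?_, ?_⟩
    · rintro (i | k) (j | l) h
      · exact hv.1 (fun hij => h (congrArg Sum.inl hij))
      · exact hvw i l
      · exact hB.isRefl _ _ (hvw j k)
      · exact hw.1 (fun hkl => h (congrArg Sum.inr hkl))
    · rintro (i | k)
      · exact hv.2 i
      · exact hw.2 k
  refine ⟨basisOfLinearIndependentOfCardEqFinrank' _ hf.linearIndependent (by simp [hcard]),
    by simpa using hf, fun i => by simp⟩

theorem exists_isOrthonormal_pair_of_isotropic [Invertible (2 : F)] (hB : B.IsSymm)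
    (hnd : B.Nondegenerate) {I : F} (hI : I * I = -1) {u : V} (hu : u ≠ 0) (huu : B u u = 0) :
    ∃ v : Fin 2 → V, B.IsOrthonormal v ∧ v 0 + I • v 1 = u := by
  obtain ⟨z, hz⟩ : ∃ z, B u z = 1 := by
    obtain ⟨z, hz⟩ : ∃ z, B u z ≠ 0 := by
      by_contra! h
      exact hu (hnd.1 u h)
    exact ⟨(B u z)⁻¹ • z, by rw [map_smul, smul_eq_mul, inv_mul_cancel₀ hz]⟩
  -- Normalise `z` to a hyperbolic partner `z'` of `u`; `g₀, g₁` is an orthonormal basis of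
  -- `span {u, z'}`.
  set z' := z - (⅟2 * B z z : F) • u
  have huz' : B u z' = 1 := by simp [z', hz, huu]
  have hz'u : B z' u = 1 := by rw [hB.eq, huz']
  have hz'z' : B z' z' = 0 := by
    simp only [z', map_sub, map_smul, LinearMap.sub_apply, LinearMap.smul_apply, smul_eq_mul, hz,
      huu, hB.eq z u]
    linear_combination -B z z * invOf_mul_self (2 : F)
  clear_value z'
  set g₀ := (⅟2 : F) • u + z'
  set g₁ := I • (z' - (⅟2 : F) • u)
  have h00 : B g₀ g₀ = 1 := by
    simp only [g₀, map_add, map_smul, LinearMap.add_apply, LinearMap.smul_apply, smul_eq_mul, huu,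
      huz', hz'u, hz'z']
    linear_combination invOf_mul_self (2 : F)
  have h11 : B g₁ g₁ = 1 := by
    simp only [g₁, map_sub, map_smul, LinearMap.sub_apply, LinearMap.smul_apply, smul_eq_mul, huu,
      huz', hz'u, hz'z']
    linear_combination -hI - I * I * invOf_mul_self (2 : F)
  have h01 : B g₀ g₁ = 0 := by
    simp only [g₀, g₁, map_add, map_sub, map_smul, LinearMap.add_apply, LinearMap.smul_apply,
      smul_eq_mul, huu, huz', hz'u, hz'z']
    ring
  have h10 : B g₁ g₀ = 0 := by rw [hB.eq, h01]
  refine ⟨![g₀, g₁], ⟨?_, ?_⟩, ?_⟩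
  · intro i j hij
    fin_cases i <;> fin_cases j <;> simp [Function.onFun, h01, h10] at hij ⊢
  · intro i
    fin_cases i <;> simp [h00, h11]
  · simp only [Matrix.cons_val_zero, Matrix.cons_val_one, g₀, g₁]
    match_scalars
    · linear_combination -(⅟2 : F) * hI + invOf_mul_self (2 : F)
    · linear_combination hI

theorem exists_isOrthonormal_basis_of_isotropic [IsAlgClosed F] [Invertible (2 : F)]
    [FiniteDimensional F V] (hB : B.IsSymm) (hnd : B.Nondegenerate) {I : F} (hI : I * I = -1)
    {u : V} (hu : u ≠ 0) (huu : B u u = 0) {n : ℕ} (hn : finrank F V = n + 2) :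
    ∃ g : Basis (Fin (n + 2)) F V, B.IsOrthonormal g ∧ g 0 + I • g 1 = u := by
  obtain ⟨v, hv, hvu⟩ := exists_isOrthonormal_pair_of_isotropic hB hnd hI hu huu
  obtain ⟨g, hg, hgv⟩ := hv.exists_basis_sum (κ := Fin n) hB hnd (by simp [hn, add_comm])
  let e : Fin 2 ⊕ Fin n ≃ Fin (n + 2) := finSumFinEquiv.trans (finCongr (add_comm 2 n))
  refine ⟨g.reindex e, by simpa only [Basis.coe_reindex] using hg.comp e.symm.injective, ?_⟩
  have he0 : e (Sum.inl 0) = 0 := rfl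
  have he1 : e (Sum.inl 1) = 1 := Fin.ext (by simp [e])
  rw [← hvu, ← hgv, ← hgv, ← he0, ← he1, Basis.reindex_apply, Basis.reindex_apply,
    e.symm_apply_apply, e.symm_apply_apply]

end LinearMap.BilinForm

namespace Module.Basis

variable {F A ι : Type*} [Field F] [NonUnitalNonAssocRing A] [Module F A] [Fintype ι]

def IsNatural (b : Basis ι F A) : Prop :=
  Pairwise fun i j => b i * b j = 0

variable {b : Basis ι F A}

theorem IsNatural.basis_mul [SMulCommClass F A A] (hb : b.IsNatural) (i : ι) (y : A) :
    b i * y = b.repr y i • (b i * b i) := by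
  conv_lhs => rw [← b.sum_repr y]
  rw [Finset.mul_sum, Finset.sum_eq_single i (fun j _ hji => by rw [mul_smul_comm, hb hji.symm,
    smul_zero]) (by simp), mul_smul_comm]

theorem IsNatural.mul_basis [IsScalarTower F A A] (hb : b.IsNatural) (x : A) (i : ι) :
    x * b i = b.repr x i • (b i * b i) := by
  conv_lhs => rw [← b.sum_repr x]
  rw [Finset.sum_mul, Finset.sum_eq_single i (fun j _ hji => by rw [smul_mul_assoc, hb hji,
    smul_zero]) (by simp), smul_mul_assoc]

theorem IsNatural.mul_eq_sum [SMulCommClass F A A] [IsScalarTower F A A]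
    (hb : b.IsNatural) (x y : A) :
    x * y = ∑ i, (b.repr x i * b.repr y i) • (b i * b i) := by
  conv_lhs => rw [← b.sum_repr x]
  rw [Finset.sum_mul]
  exact Finset.sum_congr rfl fun i _ => by rw [smul_mul_assoc, hb.basis_mul i y, smul_smul]

theorem IsNatural.mul_self_ne_zero [SMulCommClass F A A] [IsScalarTower F A A]
    (hb : b.IsNatural) (hnd : ∀ x : A, (∀ a : A, x * a = 0 ∧ a * x = 0) → x = 0) (i : ι) : b i * b i ≠ 0 := by
  intro h
  refine b.ne_zero i (hnd _ fun a => ⟨?_, ?_⟩)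
  · rw [hb.basis_mul, h, smul_zero]
  · rw [hb.mul_basis, h, smul_zero]

theorem IsNatural.mul_eq_toBilin_diagonal_smul [DecidableEq ι] [SMulCommClass F A A]
    [IsScalarTower F A A] (hb : b.IsNatural) {c : ι → F} {u : A} (hc : ∀ i, b i * b i = c i • u) (x y : A) :
    x * y = Matrix.toBilin b (Matrix.diagonal c) x y • u := by
  rw [hb.mul_eq_sum, Matrix.toBilin_apply, Finset.sum_smul]
  refine Finset.sum_congr rfl fun i _ => ?_
  simp [Matrix.diagonal_apply, hc, smul_smul, mul_comm, mul_left_comm]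

theorem IsNatural.nondegenerate_toBilin_diagonal [DecidableEq ι] [SMulCommClass F A A]
    [IsScalarTower F A A] (hb : b.IsNatural)
    (hnd : ∀ x : A, (∀ a : A, x * a = 0 ∧ a * x = 0) → x = 0) {c : ι → F} {u : A}
    (hc : ∀ i, b i * b i = c i • u) : (Matrix.toBilin b (Matrix.diagonal c)).Nondegenerate := by
  have hc0 : ∀ i, c i ≠ 0 := fun i h0 => hb.mul_self_ne_zero hnd i (by rw [hc, h0, zero_smul])
  exact (Matrix.nondegenerate_of_det_ne_zero (by simpa [Finset.prod_ne_zero_iff])).toBilin b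

end Module.Basis

theorem mul_mem_mulSub {F A : Type*} [Field F] [NonUnitalNonAssocRing A] [Module F A]
    {P Q : Submodule F A} {x y : A} (hx : x ∈ P) (hy : y ∈ Q) : x * y ∈ mulSub P Q :=
  Submodule.subset_span ⟨x, hx, y, hy, rfl⟩

theorem inMul_eq_dotProduct_smul {F : Type*} [Field F] {n : ℕ} (I : F) (x y : Fin (n + 2) → F) :
    inMul I x y = (x ⬝ᵥ y) • (Pi.single 0 1 + I • Pi.single 1 1) := by
  ext k
  rcases eq_or_ne k 0 with rfl | hk0
  · simp [inMul, dotProduct]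
  rcases eq_or_ne k 1 with rfl | hk1
  · simp [inMul, dotProduct, mul_comm]
  · simp [inMul, hk0, hk1]

/-- **Classification, case `(A²)² = 0`.** A non-degenerate evolution algebra `A` of
dimension `n ≥ 2` over an algebraically closed field of characteristic zero with
`dim A² = 1` and `(A²)² = 0` is isomorphic to `I_n`. -/
theorem stmt_6 {F : Type*} [Field F] [IsAlgClosed F] [CharZero F]
    (I : F) (hI : I * I = -1)
    {A : Type*} [NonUnitalNonAssocRing A] [Module F A]
    [SMulCommClass F A A] [IsScalarTower F A A]
    {n : ℕ} (b : Basis (Fin (n + 2)) F A)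
    (hb : ∀ i j : Fin (n + 2), i ≠ j → b i * b j = 0)
    (hnd : ∀ x : A, (∀ a : A, x * a = 0 ∧ a * x = 0) → x = 0)
    (hsq : finrank F (mulSub (⊤ : Submodule F A) ⊤) = 1)
    (hsq2 : mulSub (mulSub (⊤ : Submodule F A) ⊤) (mulSub (⊤ : Submodule F A) ⊤) = ⊥) :
    ∃ φ : A ≃ₗ[F] (Fin (n + 2) → F), ∀ x y : A, φ (x * y) = inMul I (φ x) (φ y) := by
  have : FiniteDimensional F A := b.finiteDimensional_of_finite
  have : Invertible (2 : F) := invertibleOfNonzero two_ne_zero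
  obtain ⟨u, hu, hspan⟩ := finrank_eq_one_iff'.1 hsq
  choose c hcu using fun i => hspan ⟨b i * b i, mul_mem_mulSub trivial trivial⟩
  have hc : ∀ i, b i * b i = c i • (u : A) := fun i => (congrArg Subtype.val (hcu i)).symm
  set B := Matrix.toBilin b (Matrix.diagonal c)
  have hmul : ∀ x y, x * y = B x y • (u : A) :=
    Basis.IsNatural.mul_eq_toBilin_diagonal_smul hb hc
  have hBsymm : B.IsSymm := (Matrix.isSymm_toBilin_iff_isSymm b).2 (Matrix.isSymm_diagonal c)
  have hBnd : B.Nondegenerate := Basis.IsNatural.nondegenerate_toBilin_diagonal hb hnd hc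
  have hu' : (u : A) ≠ 0 := by simpa using hu
  have huu : B u u = 0 := by
    have h := mul_mem_mulSub u.2 u.2
    rw [hsq2, Submodule.mem_bot, hmul] at h
    exact (smul_eq_zero.1 h).resolve_right hu'
  obtain ⟨g, hg, hgu⟩ := LinearMap.BilinForm.exists_isOrthonormal_basis_of_isotropic hBsymm hBnd
    hI hu' huu (by rw [finrank_eq_card_basis b, Fintype.card_fin])
  refine ⟨g.equivFun, fun x y => ?_⟩
  rw [hmul, map_smul, ← hgu, hg.apply_eq_dotProduct, inMul_eq_dotProduct_smul, map_add, map_smul]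
  simp only [Basis.equivFun_apply, Basis.repr_self, Finsupp.single_eq_pi_single]
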